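/- arXiv:1105.1952 — 3 statements merged into one kernel-verified Lean document; each statement's English description precedes it below -/
import Mathlib

section
/- There exists a constant C > 0 such that for all smooth functions φ, ψ : ℝ × ℝ² → ℝ, all indices 0 ≤ a, b ≤ 2, and all (t, x) ∈ ℝ × ℝ², the pointwise estimate |Q_{ab}(φ, ψ)(t, x)| ≤ C · (1 + (t + |x|)²)^{−1/2} · ( |φ(t,x)|₁ |∂ψ(t,x)| + |∂φ(t,x)| |ψ(t,x)|₁ ) holds, where |∂φ(t,x)| = Σ_{a=0}^{2} |∂_a φ(t,x)| and |φ(t,x)|₁ = |φ(t,x)| + Σ_{j=1}^{6} |Z_j φ(t,x)|. -/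
/- Coordinates on ℝ × ℝ² are encoded as points `x : Fin 3 → ℝ` with
`t = x 0`, `x₁ = x 1`, `x₂ = x 2`, and `x₀ = -t`.  The spatial norm is
`|x| = √((x 1)² + (x 2)²)` and `⟨y⟩ = (1 + y²)^{1/2}`. -/

/-- The partial derivative `∂ₐ`. -/
noncomputable def pd (a : Fin 3) (f : (Fin 3 → ℝ) → ℝ) : (Fin 3 → ℝ) → ℝ :=
  fun x => fderiv ℝ f x (Pi.single a 1)

/-- The coordinate functions `x₀ = -t`, `x₁`, `x₂`. -/
def coordFn (a : Fin 3) (x : Fin 3 → ℝ) : ℝ := if a = 0 then -(x 0) else x a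

/-- The vector field `Ω_{ab} φ = x_a ∂_b φ - x_b ∂_a φ`. -/
noncomputable def Omg (a b : Fin 3) (f : (Fin 3 → ℝ) → ℝ) : (Fin 3 → ℝ) → ℝ :=
  fun x => coordFn a x * pd b f x - coordFn b x * pd a f x

/-- The strong null forms `Q_{ab}(φ, ψ) = (∂_a φ)(∂_b ψ) - (∂_b φ)(∂_a ψ)`. -/
noncomputable def Qab (a b : Fin 3) (f g : (Fin 3 → ℝ) → ℝ) : (Fin 3 → ℝ) → ℝ :=
  fun x => pd a f x * pd b g x - pd b f x * pd a g x

/-- The family of vector fields `Z = (Z₁, …, Z₆) = (∂₀, ∂₁, ∂₂, Ω₀₁, Ω₀₂, Ω₁₂)`. -/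
noncomputable def Zf : Fin 6 → ((Fin 3 → ℝ) → ℝ) → ((Fin 3 → ℝ) → ℝ)
  | 0 => pd 0
  | 1 => pd 1
  | 2 => pd 2
  | 3 => Omg 0 1
  | 4 => Omg 0 2
  | 5 => Omg 1 2

/-- `|∂φ(t,x)| = Σ_{a=0}^{2} |∂_a φ(t,x)|`. -/
noncomputable def normD (f : (Fin 3 → ℝ) → ℝ) (x : Fin 3 → ℝ) : ℝ :=
  ∑ a : Fin 3, |pd a f x|

/-- `|φ(t,x)|₁ = |φ(t,x)| + Σ_{j=1}^{6} |Z_j φ(t,x)|`. -/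
noncomputable def norm1 (f : (Fin 3 → ℝ) → ℝ) (x : Fin 3 → ℝ) : ℝ :=
  |f x| + ∑ j : Fin 6, |Zf j f x|

lemma abs_Zf_le (f : (Fin 3 → ℝ) → ℝ) (x : Fin 3 → ℝ) (j : Fin 6) :
    |Zf j f x| ≤ norm1 f x := by
  have h : |Zf j f x| ≤ ∑ i : Fin 6, |Zf i f x| :=
    Finset.single_le_sum (f := fun i => |Zf i f x|) (fun i _ => abs_nonneg _)
      (Finset.mem_univ j)
  have h0 : (0:ℝ) ≤ |f x| := abs_nonneg _
  unfold norm1; linarith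

lemma abs_pd_le (f : (Fin 3 → ℝ) → ℝ) (x : Fin 3 → ℝ) (a : Fin 3) :
    |pd a f x| ≤ normD f x :=
  Finset.single_le_sum (f := fun i => |pd i f x|) (fun i _ => abs_nonneg _)
    (Finset.mem_univ a)

lemma normD_nonneg (f : (Fin 3 → ℝ) → ℝ) (x : Fin 3 → ℝ) : 0 ≤ normD f x :=
  Finset.sum_nonneg (fun i _ => abs_nonneg _)

lemma norm1_nonneg (f : (Fin 3 → ℝ) → ℝ) (x : Fin 3 → ℝ) : 0 ≤ norm1 f x :=
  add_nonneg (abs_nonneg _) (Finset.sum_nonneg (fun i _ => abs_nonneg _))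

lemma abs_omg_le (f : (Fin 3 → ℝ) → ℝ) (x : Fin 3 → ℝ) (a b : Fin 3) :
    |coordFn a x * pd b f x - coordFn b x * pd a f x| ≤ norm1 f x := by
  fin_cases a <;> fin_cases b
  · simpa using norm1_nonneg f x
  · simpa [Zf, Omg] using abs_Zf_le f x 3
  · simpa [Zf, Omg] using abs_Zf_le f x 4
  · rw [abs_sub_comm]; simpa [Zf, Omg] using abs_Zf_le f x 3
  · simpa using norm1_nonneg f x
  · simpa [Zf, Omg] using abs_Zf_le f x 5
  · rw [abs_sub_comm]; simpa [Zf, Omg] using abs_Zf_le f x 4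
  · rw [abs_sub_comm]; simpa [Zf, Omg] using abs_Zf_le f x 5
  · simpa using norm1_nonneg f x

lemma abs_coordFn (x : Fin 3 → ℝ) (a : Fin 3) : |coordFn a x| = |x a| := by
  unfold coordFn
  split <;> simp_all

/-- there is a universal constant `C > 0` such that for all smooth
`φ, ψ` and all `a, b` and all points `(t,x)`,
`|Q_{ab}(φ,ψ)(t,x)| ≤ C ⟨t + |x|⟩⁻¹ (|φ|₁ |∂ψ| + |∂φ| |ψ|₁)`. -/
theorem null_form_decay_estimate :
    ∃ C : ℝ, 0 < C ∧
      ∀ (φ ψ : (Fin 3 → ℝ) → ℝ), ContDiff ℝ (⊤ : ℕ∞) φ → ContDiff ℝ (⊤ : ℕ∞) ψ →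
        ∀ (a b : Fin 3) (x : Fin 3 → ℝ),
          |Qab a b φ ψ x|
            ≤ C * (Real.sqrt (1 + (x 0 + Real.sqrt ((x 1) ^ 2 + (x 2) ^ 2)) ^ 2))⁻¹
                * (norm1 φ x * normD ψ x + normD φ x * norm1 ψ x) := by
  refine ⟨8, by norm_num, ?_⟩
  intro φ ψ _ _ a b x
  set S : ℝ := norm1 φ x * normD ψ x + normD φ x * norm1 ψ x with hSdef
  have hSnn : 0 ≤ S := add_nonneg
    (mul_nonneg (norm1_nonneg _ _) (normD_nonneg _ _))
    (mul_nonneg (normD_nonneg _ _) (norm1_nonneg _ _))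
  set r : ℝ := Real.sqrt ((x 1) ^ 2 + (x 2) ^ 2) with hrdef
  set G : ℝ := Real.sqrt (1 + (x 0 + r) ^ 2) with hGdef
  have hr0 : 0 ≤ r := Real.sqrt_nonneg _
  have hr_le : r ≤ |x 1| + |x 2| := by
    rw [hrdef]
    have h1 : (x 1) ^ 2 + (x 2) ^ 2 ≤ (|x 1| + |x 2|) ^ 2 := by
      have := abs_nonneg (x 1); have := abs_nonneg (x 2)
      nlinarith [sq_abs (x 1), sq_abs (x 2)]
    calc Real.sqrt ((x 1) ^ 2 + (x 2) ^ 2) ≤ Real.sqrt ((|x 1| + |x 2|) ^ 2) :=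
          Real.sqrt_le_sqrt h1
      _ = |x 1| + |x 2| := Real.sqrt_sq (by positivity)
  have hG1 : 1 ≤ G := by
    rw [hGdef]
    have : Real.sqrt 1 ≤ Real.sqrt (1 + (x 0 + r) ^ 2) :=
      Real.sqrt_le_sqrt (by nlinarith [sq_nonneg (x 0 + r)])
    simpa using this
  have hGpos : 0 < G := lt_of_lt_of_le one_pos hG1
  have hG_le : G ≤ 1 + |x 0| + |x 1| + |x 2| := by
    have h1 : G ≤ 1 + |x 0 + r| := by
      rw [hGdef]
      calc Real.sqrt (1 + (x 0 + r) ^ 2) ≤ Real.sqrt ((1 + |x 0 + r|) ^ 2) :=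
            Real.sqrt_le_sqrt (by nlinarith [abs_nonneg (x 0 + r), sq_abs (x 0 + r)])
        _ = 1 + |x 0 + r| := Real.sqrt_sq (by positivity)
    have h2 : |x 0 + r| ≤ |x 0| + r := by
      calc |x 0 + r| ≤ |x 0| + |r| := abs_add_le _ _
        _ = |x 0| + r := by rw [abs_of_nonneg hr0]
    linarith
  -- bound on |Q| itself
  have hQab : Qab a b φ ψ x = pd a φ x * pd b ψ x - pd b φ x * pd a ψ x := rfl
  have hQ : |Qab a b φ ψ x| ≤ 2 * S := by
    have h1 : |Qab a b φ ψ x| ≤ |pd a φ x| * |pd b ψ x| + |pd b φ x| * |pd a ψ x| := by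
      rw [hQab]
      calc |pd a φ x * pd b ψ x - pd b φ x * pd a ψ x|
          ≤ |pd a φ x * pd b ψ x| + |pd b φ x * pd a ψ x| := abs_sub _ _
        _ = |pd a φ x| * |pd b ψ x| + |pd b φ x| * |pd a ψ x| := by
            rw [abs_mul, abs_mul]
    have h2 : |pd a φ x| * |pd b ψ x| ≤ normD φ x * norm1 ψ x :=
      mul_le_mul (abs_pd_le φ x a)
        ((abs_pd_le ψ x b).trans (by
          have h := abs_Zf_le; -- normD ≤ norm1
          calc normD ψ x = |Zf 0 ψ x| + |Zf 1 ψ x| + |Zf 2 ψ x| := by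
                simp [normD, Fin.sum_univ_three, Zf]
            _ ≤ norm1 ψ x := by
                have h3 := abs_nonneg (Zf 3 ψ x)
                have h4 := abs_nonneg (Zf 4 ψ x)
                have h5 := abs_nonneg (Zf 5 ψ x)
                have h0 := abs_nonneg (ψ x)
                simp only [norm1, Fin.sum_univ_six]
                linarith))
        (abs_nonneg _) (normD_nonneg _ _)
    have h3 : |pd b φ x| * |pd a ψ x| ≤ normD φ x * norm1 ψ x :=
      mul_le_mul (abs_pd_le φ x b)
        ((abs_pd_le ψ x a).trans (by
          calc normD ψ x = |Zf 0 ψ x| + |Zf 1 ψ x| + |Zf 2 ψ x| := by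
                simp [normD, Fin.sum_univ_three, Zf]
            _ ≤ norm1 ψ x := by
                have h3 := abs_nonneg (Zf 3 ψ x)
                have h4 := abs_nonneg (Zf 4 ψ x)
                have h5 := abs_nonneg (Zf 5 ψ x)
                have h0 := abs_nonneg (ψ x)
                simp only [norm1, Fin.sum_univ_six]
                linarith))
        (abs_nonneg _) (normD_nonneg _ _)
    have hnn : 0 ≤ norm1 φ x * normD ψ x :=
      mul_nonneg (norm1_nonneg _ _) (normD_nonneg _ _)
    rw [hSdef]; linarith
  -- bound on |x c| * |Q| for each coordinate c
  have hc : ∀ c : Fin 3, |x c| * |Qab a b φ ψ x| ≤ 2 * S := by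
    intro c
    have hid : coordFn c x * Qab a b φ ψ x =
        pd a φ x * (coordFn c x * pd b ψ x - coordFn b x * pd c ψ x)
        - pd b φ x * (coordFn c x * pd a ψ x - coordFn a x * pd c ψ x)
        - (coordFn a x * pd b φ x - coordFn b x * pd a φ x) * pd c ψ x := by
      rw [hQab]; ring
    have habs : |x c| * |Qab a b φ ψ x| = |coordFn c x * Qab a b φ ψ x| := by
      rw [abs_mul, abs_coordFn]
    rw [habs, hid]
    have h1 : |pd a φ x * (coordFn c x * pd b ψ x - coordFn b x * pd c ψ x)|
        ≤ normD φ x * norm1 ψ x := by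
      rw [abs_mul]
      exact mul_le_mul (abs_pd_le φ x a) (abs_omg_le ψ x c b) (abs_nonneg _)
        (normD_nonneg _ _)
    have h2 : |pd b φ x * (coordFn c x * pd a ψ x - coordFn a x * pd c ψ x)|
        ≤ normD φ x * norm1 ψ x := by
      rw [abs_mul]
      exact mul_le_mul (abs_pd_le φ x b) (abs_omg_le ψ x c a) (abs_nonneg _)
        (normD_nonneg _ _)
    have h3 : |(coordFn a x * pd b φ x - coordFn b x * pd a φ x) * pd c ψ x|
        ≤ norm1 φ x * normD ψ x := by
      rw [abs_mul]
      exact mul_le_mul (abs_omg_le φ x a b) (abs_pd_le ψ x c) (abs_nonneg _)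
        (norm1_nonneg _ _)
    have htri : |pd a φ x * (coordFn c x * pd b ψ x - coordFn b x * pd c ψ x)
        - pd b φ x * (coordFn c x * pd a ψ x - coordFn a x * pd c ψ x)
        - (coordFn a x * pd b φ x - coordFn b x * pd a φ x) * pd c ψ x|
        ≤ |pd a φ x * (coordFn c x * pd b ψ x - coordFn b x * pd c ψ x)|
          + |pd b φ x * (coordFn c x * pd a ψ x - coordFn a x * pd c ψ x)|
          + |(coordFn a x * pd b φ x - coordFn b x * pd a φ x) * pd c ψ x| := by
      calc _ ≤ |pd a φ x * (coordFn c x * pd b ψ x - coordFn b x * pd c ψ x)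
          - pd b φ x * (coordFn c x * pd a ψ x - coordFn a x * pd c ψ x)|
          + |(coordFn a x * pd b φ x - coordFn b x * pd a φ x) * pd c ψ x| := abs_sub _ _
        _ ≤ _ := by
          have := abs_sub (pd a φ x * (coordFn c x * pd b ψ x - coordFn b x * pd c ψ x))
            (pd b φ x * (coordFn c x * pd a ψ x - coordFn a x * pd c ψ x))
          linarith
    rw [hSdef]
    have hnn1 : 0 ≤ normD φ x * norm1 ψ x :=
      mul_nonneg (normD_nonneg _ _) (norm1_nonneg _ _)
    have hnn2 : 0 ≤ norm1 φ x * normD ψ x :=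
      mul_nonneg (norm1_nonneg _ _) (normD_nonneg _ _)
    linarith
  -- assemble
  have key : |Qab a b φ ψ x| * G ≤ 8 * S := by
    have h1 : |Qab a b φ ψ x| * G ≤ |Qab a b φ ψ x| * (1 + |x 0| + |x 1| + |x 2|) :=
      mul_le_mul_of_nonneg_left hG_le (abs_nonneg _)
    have h2 : |Qab a b φ ψ x| * (1 + |x 0| + |x 1| + |x 2|)
        = |Qab a b φ ψ x| + |x 0| * |Qab a b φ ψ x| + |x 1| * |Qab a b φ ψ x|
          + |x 2| * |Qab a b φ ψ x| := by ring
    have hc0 := hc 0; have hc1 := hc 1; have hc2 := hc 2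
    linarith [h1, h2.le, h2.ge]
  have hfinal : (8:ℝ) * G⁻¹ * S = 8 * S / G := by
    field_simp
  rw [hfinal, le_div_iff₀ hGpos]
  exact key
end

section
/- Let (λ_{ab})_{0 ≤ a,b ≤ 2} be real numbers such that Σ_{a,b=0}^{2} λ_{ab} ω_a ω_b = 0 for every ω = (ω₀, ω₁, ω₂) ∈ ℝ³ with ω₀² − ω₁² − ω₂² = 1. Then λ_{ab} + λ_{ba} = 0 for all 0 ≤ a, b ≤ 2; in particular the quadratic form Σ_{a,b=0}^{2} λ_{ab} X_a X_b vanishes identically on ℝ³. -/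
/-! Since `Σ λ_{ab} ω_a ω_b` only sees the symmetric part `λ_{ab} + λ_{ba}`, it is determined by six
numbers, and six rational points of the hyperboloid already force them to vanish: `(1, 0, 0)` gives
`λ₀₀ = 0`, the pairs `(5/4, ±3/4, 0)` and `(5/4, 0, ±3/4)` separate the diagonal entries from the
mixed ones, and `(3/2, 1, 1/2)` then gives `λ₁₂ + λ₂₁ = 0`. -/

open Finset

theorem sum_sum_mul_mul_eq_zero_of_add_swap_eq_zero {ι R : Type*} [Fintype ι] [CommRing R]
    [NoZeroDivisors R] [CharZero R] {lam : ι → ι → R} (hlam : ∀ a b, lam a b + lam b a = 0)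
    (X : ι → R) : ∑ a, ∑ b, lam a b * X a * X b = 0 := by
  have hswap : ∑ a, ∑ b, lam b a * X a * X b = ∑ a, ∑ b, lam a b * X a * X b := by
    rw [Finset.sum_comm]
    exact sum_congr rfl fun _ _ ↦ sum_congr rfl fun _ _ ↦ mul_right_comm _ _ _
  have htwice : 2 * ∑ a, ∑ b, lam a b * X a * X b = 0 := by
    calc 2 * ∑ a, ∑ b, lam a b * X a * X b
        = ∑ a, ∑ b, lam a b * X a * X b + ∑ a, ∑ b, lam b a * X a * X b := by rw [hswap, two_mul]
      _ = ∑ a, ∑ b, (lam a b + lam b a) * X a * X b := by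
        simp only [← sum_add_distrib, add_mul]
      _ = 0 := by simp [hlam]
  exact (mul_eq_zero.1 htwice).resolve_left two_ne_zero

theorem sum_sum_fin_three_mul_mul {R : Type*} [CommRing R] (lam : Fin 3 → Fin 3 → R)
    (ω : Fin 3 → R) :
    ∑ a, ∑ b, lam a b * ω a * ω b =
      lam 0 0 * ω 0 ^ 2 + lam 1 1 * ω 1 ^ 2 + lam 2 2 * ω 2 ^ 2 + (lam 0 1 + lam 1 0) * ω 0 * ω 1
        + (lam 0 2 + lam 2 0) * ω 0 * ω 2 + (lam 1 2 + lam 2 1) * ω 1 * ω 2 := by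
  simp only [Fin.sum_univ_three]
  ring

theorem add_swap_eq_zero_of_forall_hyperboloid (lam : Fin 3 → Fin 3 → ℝ)
    (h : ∀ ω : Fin 3 → ℝ, ω 0 ^ 2 - ω 1 ^ 2 - ω 2 ^ 2 = 1 →
      ∑ a, ∑ b, lam a b * ω a * ω b = 0) (a b : Fin 3) :
    lam a b + lam b a = 0 := by
  have hpt : ∀ x y z : ℝ, x ^ 2 - y ^ 2 - z ^ 2 = 1 →
      lam 0 0 * x ^ 2 + lam 1 1 * y ^ 2 + lam 2 2 * z ^ 2 + (lam 0 1 + lam 1 0) * x * y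
        + (lam 0 2 + lam 2 0) * x * z + (lam 1 2 + lam 2 1) * y * z = 0 := by
    intro x y z hxyz
    simpa [sum_sum_fin_three_mul_mul] using h ![x, y, z] (by simpa using hxyz)
  have h₁ := hpt 1 0 0 (by norm_num)
  have h₂ := hpt (5 / 4) (3 / 4) 0 (by norm_num)
  have h₃ := hpt (5 / 4) (-3 / 4) 0 (by norm_num)
  have h₄ := hpt (5 / 4) 0 (3 / 4) (by norm_num)
  have h₅ := hpt (5 / 4) 0 (-3 / 4) (by norm_num)
  have h₆ := hpt (3 / 2) 1 (1 / 2) (by norm_num)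
  fin_cases a <;> fin_cases b <;>
    simp only [Fin.zero_eta, Fin.mk_one, Fin.reduceFinMk, Fin.isValue] <;> linarith

/-- if the quadratic form `Σ_{a,b} λ_{ab} ω_a ω_b` vanishes on
the unit hyperboloid `ω₀² − ω₁² − ω₂² = 1`, then `λ_{ab} + λ_{ba} = 0` for all
`a, b`; in particular the quadratic form vanishes identically on `ℝ³`. -/
theorem quadratic_form_vanishing_on_hyperboloid (lam : Fin 3 → Fin 3 → ℝ)
    (h : ∀ ω : Fin 3 → ℝ, (ω 0) ^ 2 - (ω 1) ^ 2 - (ω 2) ^ 2 = 1 →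
      ∑ a : Fin 3, ∑ b : Fin 3, lam a b * ω a * ω b = 0) :
    (∀ a b : Fin 3, lam a b + lam b a = 0) ∧
      ∀ X : Fin 3 → ℝ, ∑ a : Fin 3, ∑ b : Fin 3, lam a b * X a * X b = 0 := by
  have hsymm := add_swap_eq_zero_of_forall_hyperboloid lam h
  exact ⟨hsymm, sum_sum_mul_mul_eq_zero_of_add_swap_eq_zero hsymm⟩
end

section
/- Let (μ_{abc})_{0 ≤ a,b,c ≤ 2} be real numbers such that Σ_{a,b,c=0}^{2} μ_{abc} ω_a ω_b ω_c = 0 for every ω = (ω₀, ω₁, ω₂) ∈ ℝ³ with ω₀² − ω₁² − ω₂² = 1. Then the cubic form Σ_{a,b,c=0}^{2} μ_{abc} X_a X_b X_c vanishes identically on ℝ³; equivalently, for all 0 ≤ a, b, c ≤ 2 the symmetrized coefficients satisfy Σ_{σ} μ_{σ(a) σ(b) σ(c)} = 0, where σ ranges over the permutations of the three indices. -/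
/-!
A cubic form `P` is homogeneous of degree three and the Minkowski form `q` of degree two, so
`P x = q x ^ (3/2) * P (x / √(q x))` vanishes on the open cone `q > 0` as soon as `P` vanishes on
the hyperboloid `q = 1`. Being a polynomial, `P` is analytic, and by the identity principle it
vanishes everywhere. The symmetrized coefficients are the values at basis vectors of the
polarization of `P`, which is a combination of values of `P`.
-/

open Finset

section Homogeneous

variable {E F : Type*}

theorem eq_zero_of_homogeneous_of_pos [AddCommGroup E] [Module ℝ E] [AddCommGroup F]
    [Module ℝ F] {f : E → F} {q : E → ℝ} {n : ℕ}
    (hf : ∀ t : ℝ, 0 < t → ∀ x, f (t • x) = t ^ n • f x)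
    (hq : ∀ t : ℝ, 0 < t → ∀ x, q (t • x) = t ^ 2 * q x)
    (h : ∀ ω, q ω = 1 → f ω = 0) {x : E} (hx : 0 < q x) : f x = 0 := by
  set t := √(q x)
  have ht : 0 < t := Real.sqrt_pos.2 hx
  have hω : q (t⁻¹ • x) = 1 := by
    rw [hq _ (inv_pos.2 ht), inv_pow, Real.sq_sqrt hx.le, inv_mul_cancel₀ hx.ne']
  calc f x = f (t • t⁻¹ • x) := by rw [smul_inv_smul₀ ht.ne']
    _ = 0 := by rw [hf t ht, h _ hω, smul_zero]

theorem AnalyticOnNhd.eq_zero_of_homogeneous_of_eq_one [NormedAddCommGroup E] [NormedSpace ℝ E]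
    [NormedAddCommGroup F] [NormedSpace ℝ F] {f : E → F} {q : E → ℝ} {n : ℕ}
    (hf_an : AnalyticOnNhd ℝ f Set.univ) (hf : ∀ t : ℝ, 0 < t → ∀ x, f (t • x) = t ^ n • f x)
    (hq_cont : Continuous q) (hq : ∀ t : ℝ, 0 < t → ∀ x, q (t • x) = t ^ 2 * q x)
    {x₀ : E} (hx₀ : 0 < q x₀) (h : ∀ ω, q ω = 1 → f ω = 0) : f = 0 := by
  refine hf_an.eq_of_eventuallyEq analyticOnNhd_const (z₀ := x₀) ?_
  filter_upwards [hq_cont.continuousAt.eventually (lt_mem_nhds hx₀)] with x hx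
  exact eq_zero_of_homogeneous_of_pos hf hq h hx

end Homogeneous

theorem Equiv.Perm.sum_fin_three {M : Type*} [AddCommMonoid M] (g : Fin 3 → Fin 3 → Fin 3 → M) :
    ∑ σ : Equiv.Perm (Fin 3), g (σ 0) (σ 1) (σ 2) =
      g 0 1 2 + g 0 2 1 + g 1 0 2 + g 1 2 0 + g 2 0 1 + g 2 1 0 := by
  have h2 : ∀ p (e : Equiv.Perm (Fin 2)),
      Equiv.Perm.decomposeFin.symm (p, e) 2 = Equiv.swap 0 p (e 1).succ :=
    fun p e => Equiv.Perm.decomposeFin_symm_apply_succ e p 1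
  rw [← Equiv.Perm.decomposeFin.symm.sum_comp]
  simp [Fintype.sum_prod_type, Fin.sum_univ_succ, ← Equiv.Perm.decomposeFin.symm.sum_comp, h2,
    Equiv.swap_apply_of_ne_of_ne]
  abel

section CoeffTrilinear

variable {R ι : Type*} [CommRing R] [Fintype ι] (μ : ι → ι → ι → R)

def coeffTrilinear (x y z : ι → R) : R :=
  ∑ a, ∑ b, ∑ c, μ a b c * x a * y b * z c

theorem coeffTrilinear_add_left (x x' y z : ι → R) :
    coeffTrilinear μ (x + x') y z = coeffTrilinear μ x y z + coeffTrilinear μ x' y z := by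
  simp only [coeffTrilinear, Pi.add_apply, mul_add, add_mul, sum_add_distrib]

theorem coeffTrilinear_add_middle (x y y' z : ι → R) :
    coeffTrilinear μ x (y + y') z = coeffTrilinear μ x y z + coeffTrilinear μ x y' z := by
  simp only [coeffTrilinear, Pi.add_apply, mul_add, add_mul, sum_add_distrib]

theorem coeffTrilinear_add_right (x y z z' : ι → R) :
    coeffTrilinear μ x y (z + z') = coeffTrilinear μ x y z + coeffTrilinear μ x y z' := by
  simp only [coeffTrilinear, Pi.add_apply, mul_add, sum_add_distrib]

theorem coeffTrilinear_smul_smul_smul (t : R) (x : ι → R) :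
    coeffTrilinear μ (t • x) (t • x) (t • x) = t ^ 3 * coeffTrilinear μ x x x := by
  simp only [coeffTrilinear, Pi.smul_apply, smul_eq_mul, mul_sum]
  exact sum_congr rfl fun a _ => sum_congr rfl fun b _ => sum_congr rfl fun c _ => by ring

theorem coeffTrilinear_single [DecidableEq ι] (a b c : ι) :
    coeffTrilinear μ (Pi.single a 1) (Pi.single b 1) (Pi.single c 1) = μ a b c := by
  simp [coeffTrilinear, Pi.single_apply]

theorem sum_perm_coeffTrilinear (x : Fin 3 → ι → R) :
    ∑ σ : Equiv.Perm (Fin 3), coeffTrilinear μ (x (σ 0)) (x (σ 1)) (x (σ 2)) =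
      coeffTrilinear μ (x 0 + x 1 + x 2) (x 0 + x 1 + x 2) (x 0 + x 1 + x 2)
        - coeffTrilinear μ (x 0 + x 1) (x 0 + x 1) (x 0 + x 1)
        - coeffTrilinear μ (x 0 + x 2) (x 0 + x 2) (x 0 + x 2)
        - coeffTrilinear μ (x 1 + x 2) (x 1 + x 2) (x 1 + x 2)
        + coeffTrilinear μ (x 0) (x 0) (x 0) + coeffTrilinear μ (x 1) (x 1) (x 1)
        + coeffTrilinear μ (x 2) (x 2) (x 2) := by
  rw [Equiv.Perm.sum_fin_three (fun i j k => coeffTrilinear μ (x i) (x j) (x k))]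
  simp only [coeffTrilinear_add_left, coeffTrilinear_add_middle, coeffTrilinear_add_right]
  ring

theorem sum_perm_coeff_eq_zero (h : ∀ x, coeffTrilinear μ x x x = 0) (v : Fin 3 → ι) :
    ∑ σ : Equiv.Perm (Fin 3), μ (v (σ 0)) (v (σ 1)) (v (σ 2)) = 0 := by
  classical
  simp_rw [← coeffTrilinear_single μ]
  rw [sum_perm_coeffTrilinear μ fun i => Pi.single (v i) 1]
  simp only [h, sub_zero, add_zero]

end CoeffTrilinear

theorem analyticOnNhd_coeffTrilinear_diag {𝕜 ι : Type*} [NontriviallyNormedField 𝕜] [Fintype ι]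
    (μ : ι → ι → ι → 𝕜) : AnalyticOnNhd 𝕜 (fun x => coeffTrilinear μ x x x) Set.univ := by
  intro x _
  have hproj : ∀ a, AnalyticAt 𝕜 (fun X : ι → 𝕜 => X a) x := fun a =>
    (ContinuousLinearMap.proj (R := 𝕜) (φ := fun _ : ι => 𝕜) a).analyticAt x
  exact analyticAt_fun_sum _ fun a _ => analyticAt_fun_sum _ fun b _ => analyticAt_fun_sum _
    fun c _ => ((analyticAt_const.fun_mul (hproj a)).fun_mul (hproj b)).fun_mul (hproj c)

/-- if the cubic form `Σ_{a,b,c} μ_{abc} ω_a ω_b ω_c` vanishes on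
the unit hyperboloid `ω₀² − ω₁² − ω₂² = 1`, then the cubic form vanishes
identically on `ℝ³`; equivalently, all symmetrized coefficients
`Σ_σ μ_{σ(a)σ(b)σ(c)}` (over permutations `σ` of the three index slots)
vanish. -/
theorem cubic_form_vanishing_on_hyperboloid (μ : Fin 3 → Fin 3 → Fin 3 → ℝ)
    (h : ∀ ω : Fin 3 → ℝ, (ω 0) ^ 2 - (ω 1) ^ 2 - (ω 2) ^ 2 = 1 →
      ∑ a : Fin 3, ∑ b : Fin 3, ∑ c : Fin 3, μ a b c * ω a * ω b * ω c = 0) :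
    (∀ X : Fin 3 → ℝ,
        ∑ a : Fin 3, ∑ b : Fin 3, ∑ c : Fin 3, μ a b c * X a * X b * X c = 0) ∧
      ∀ a b c : Fin 3,
        ∑ σ : Equiv.Perm (Fin 3),
          μ (![a, b, c] (σ 0)) (![a, b, c] (σ 1)) (![a, b, c] (σ 2)) = 0 := by
  have hcubic : (fun X => coeffTrilinear μ X X X) = 0 :=
    (analyticOnNhd_coeffTrilinear_diag μ).eq_zero_of_homogeneous_of_eq_one
      (q := fun ω => ω 0 ^ 2 - ω 1 ^ 2 - ω 2 ^ 2) (x₀ := Pi.single 0 1)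
      (fun t _ x => coeffTrilinear_smul_smul_smul μ t x) (by fun_prop)
      (fun t _ x => by simp only [Pi.smul_apply, smul_eq_mul]; ring) (by simp) h
  have hX : ∀ X, coeffTrilinear μ X X X = 0 := congrFun hcubic
  exact ⟨hX, fun a b c => sum_perm_coeff_eq_zero μ hX ![a, b, c]⟩
end
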